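/- If the auction system is β-KL-expressive and c-homogeneous, then in the full-information setting, for every conservative pure Nash equilibrium b of the PBM-GSP mechanism (with any number of slots), SW(OPT(v)) ≤ ((β+1)/β)·c · SW(b); that is, the pure price of anarchy of PBM-GSP in the multi-slot case is at most (β+1)c/β. -/

import Mathlib

open Finset MeasureTheory

noncomputable section

namespace PBM

attribute [local instance] Classical.propDecidable

/-- 0-indexed rank of advertiser `i` among the advertisers with a positive bid
(higher bid first, ties broken by smaller index). -/
def rank {n : ℕ} (bs : Fin n → ℝ) (i : Fin n) : ℕ :=
  (Finset.univ.filter fun j => 0 < bs j ∧ (bs i < bs j ∨ (bs j = bs i ∧ j < i))).card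

/-- 0-indexed rank of `i` among all coordinates of `x` (decreasing, ties by index). -/
def rankAll {n : ℕ} (x : Fin n → ℝ) (i : Fin n) : ℕ :=
  (Finset.univ.filter fun j => x i < x j ∨ (x j = x i ∧ j < i)).card

/-- click probability of the slot obtained by `i` (0 if `i` places no positive bid). -/
def slotW {n : ℕ} (w : ℕ → ℝ) (bs : Fin n → ℝ) (i : Fin n) : ℝ :=
  if 0 < bs i then w (rank bs i) else 0

/-- GSP per-click payment of `i`: the bid of the advertiser ranked right below `i`
(0 if there is none). -/
def pay {n : ℕ} (bs : Fin n → ℝ) (i : Fin n) : ℝ :=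
  ∑ j ∈ Finset.univ.filter (fun j => 0 < bs j ∧ rank bs j = rank bs i + 1), bs j

/-- utility of bidder `i` in the single-keyword GSP game with values `vv`. -/
def gspUtil {n : ℕ} (w : ℕ → ℝ) (vv : Fin n → ℝ) (bs : Fin n → ℝ) (i : Fin n) : ℝ :=
  slotW w bs i * (vv i - pay bs i)

variable {Q S : Type*} [Fintype Q] [Fintype S]

/-- expected value of keyword `s` for an advertiser with per-query valuations `vq`. -/
def kwVal (P : Q → ℝ) (pi : Q → S → ℝ) (vq : Q → ℝ) (s : S) : ℝ :=
  (∑ q, pi q s * vq q * P q) / (∑ q, pi q s * P q)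

/-- probability mass of keyword `s`. -/
def mass (P : Q → ℝ) (pi : Q → S → ℝ) (s : S) : ℝ := ∑ q, pi q s * P q

/-- expected utility of advertiser `i` in PBM-GSP. -/
def util {n : ℕ} (P : Q → ℝ) (pi : Q → S → ℝ) (w : ℕ → ℝ)
    (v : Fin n → Q → ℝ) (b : Fin n → S → ℝ) (i : Fin n) : ℝ :=
  ∑ q, P q * ∑ s, pi q s *
    (slotW w (fun j => b j s) i * (v i q - pay (fun j => b j s) i))

/-- social welfare of bid profile `b` in PBM-GSP. -/
def SW {n : ℕ} (P : Q → ℝ) (pi : Q → S → ℝ) (w : ℕ → ℝ)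
    (v : Fin n → Q → ℝ) (b : Fin n → S → ℝ) : ℝ :=
  ∑ q, P q * ∑ s, pi q s * ∑ i, slotW w (fun j => b j s) i * v i q

/-- optimal social welfare. -/
def SWopt {n : ℕ} (P : Q → ℝ) (w : ℕ → ℝ) (v : Fin n → Q → ℝ) : ℝ :=
  ∑ q, P q * ∑ i, w (rankAll (fun j => v j q) i) * v i q

/-- welfare of the truthful keyword-bid profile `𝔳` (each advertiser bids his
expected keyword value on every keyword, no `κ` constraint). -/
def SWtruth {n : ℕ} (P : Q → ℝ) (pi : Q → S → ℝ) (w : ℕ → ℝ)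
    (v : Fin n → Q → ℝ) : ℝ :=
  ∑ q, P q * ∑ s, pi q s *
    ∑ i, w (rankAll (fun j => kwVal P pi (v j) s) i) * kwVal P pi (v i) s

/-- a bid vector is valid if it is nonnegative and positive on at most `κ` keywords. -/
def ValidBid (κ : ℕ) (bi : S → ℝ) : Prop :=
  (∀ s, 0 ≤ bi s) ∧ ((Finset.univ.filter fun s => 0 < bi s).card ≤ κ)

/-- a bid profile is conservative if everybody bids at most his expected keyword value. -/
def Conservative {n : ℕ} (P : Q → ℝ) (pi : Q → S → ℝ)
    (v : Fin n → Q → ℝ) (b : Fin n → S → ℝ) : Prop :=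
  ∀ i s, b i s ≤ kwVal P pi (v i) s

/-- `β`-keyword-level expressiveness for valuation profile `v`. -/
def KLExpressive {n : ℕ} (pi : Q → S → ℝ) (v : Fin n → Q → ℝ) (κ : ℕ) (β : ℝ) : Prop :=
  ∀ i : Fin n,
    β * ((Finset.univ.filter fun s : S => ∃ q, 0 < pi q s ∧ 0 < v i q).card : ℝ) ≤ (κ : ℝ)

/-- expected utility of advertiser `i` in PBM-GSP with reserve price vector `r`. -/
def utilR {n : ℕ} (P : Q → ℝ) (pi : Q → S → ℝ) (w : ℕ → ℝ) (r : S → ℝ)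
    (v : Fin n → Q → ℝ) (b : Fin n → S → ℝ) (i : Fin n) : ℝ :=
  ∑ q, P q * ∑ s, pi q s *
    (if 0 < b i s ∧ r s ≤ b i s then
       w (rank (fun j => b j s) i) * (v i q - max (r s) (pay (fun j => b j s) i))
     else 0)

/-- revenue of PBM-GSP with reserve price vector `r`. -/
def revenue {n : ℕ} (P : Q → ℝ) (pi : Q → S → ℝ) (w : ℕ → ℝ) (r : S → ℝ)
    (b : Fin n → S → ℝ) : ℝ :=
  ∑ q, P q * ∑ s, pi q s * ∑ i,
    (if 0 < b i s ∧ r s ≤ b i s then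
       w (rank (fun j => b j s) i) * max (r s) (pay (fun j => b j s) i)
     else 0)

/-- reserve-restricted social welfare of PBM-GSP with reserve price vector `r`. -/
def SWres {n : ℕ} (P : Q → ℝ) (pi : Q → S → ℝ) (w : ℕ → ℝ) (r : S → ℝ)
    (v : Fin n → Q → ℝ) (b : Fin n → S → ℝ) : ℝ :=
  ∑ q, P q * ∑ s, pi q s * ∑ i,
    (if 0 < b i s ∧ r s ≤ b i s then w (rank (fun j => b j s) i) * v i q else 0)

/-- marginal CDF on keyword `s` of a distribution `T` of keyword-valuation vectors. -/
def cdfT (T : Measure (S → ℝ)) (s : S) (x : ℝ) : ℝ :=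
  ((T.map fun f => f s) (Set.Iic x)).toReal

/-- the virtual value function `φ_s(x) = x - (1 - T_s(x))/t_s(x)`. -/
def virt (T : Measure (S → ℝ)) (td : S → ℝ → ℝ) (s : S) (x : ℝ) : ℝ :=
  x - (1 - cdfT T s x) / td s x

/-- `td s` is the density of the marginal of `T` on keyword `s`. -/
def HasDensity (T : Measure (S → ℝ)) (td : S → ℝ → ℝ) : Prop :=
  ∀ s : S, T.map (fun f => f s)
    = MeasureTheory.volume.withDensity (fun x => ENNReal.ofReal (td s x))

/-- `r` is the vector of Myerson reserve prices. -/
def MyersonReserve (T : Measure (S → ℝ)) (td : S → ℝ → ℝ) (r : S → ℝ) : Prop :=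
  ∀ s : S, 0 ≤ r s ∧ virt T td s (r s) = 0

/-- `T` is an MHR distribution with bounded derivative `η`. -/
def MHRBounded (T : Measure (S → ℝ)) (td : S → ℝ → ℝ) (r : S → ℝ) (η : ℝ) : Prop :=
  ∀ s : S, (∀ x : ℝ, 0 ≤ x → DifferentiableAt ℝ (virt T td s) x) ∧
    (∀ x : ℝ, 0 ≤ x → 1 ≤ deriv (virt T td s) x) ∧
    (∀ x : ℝ, r s ≤ x → deriv (virt T td s) x ≤ η)

/-- `T` has a monotone hazard rate. -/
def MHRhazard (T : Measure (S → ℝ)) (td : S → ℝ → ℝ) : Prop :=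
  ∀ s : S, MonotoneOn (fun x => td s x / (1 - cdfT T s x))
    {x : ℝ | 0 ≤ x ∧ cdfT T s x < 1}

/-- expected revenue (per valuation profile) of PBM-VCG with reserve prices, via
Myerson's lemma: virtual-value surplus of the welfare-maximizing allocation. -/
def revVCG {n : ℕ} (P : Q → ℝ) (pi : Q → S → ℝ) (w : ℕ → ℝ)
    (T : Measure (S → ℝ)) (td : S → ℝ → ℝ) (v : Fin n → Q → ℝ) : ℝ :=
  ∑ s, mass P pi s * ∑ i, w (rankAll (fun j => kwVal P pi (v j) s) i) *
    (if 0 < virt T td s (kwVal P pi (v i) s) then virt T td s (kwVal P pi (v i) s) else 0)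

end PBM

/-!
Let `𝔳` be the truthful keyword profile, in which every advertiser bids his keyword value
`v_i^s` on every keyword. By `c`-homogeneity each query value is at most `c` times the
corresponding keyword value, so the rearrangement inequality gives `SW(OPT) ≤ c · SW(𝔳)`.

Fix an equilibrium `b` and let `γ_i^s` be the bid in `b` at the position that `i` occupies in
`𝔳` on keyword `s`. Bidding slightly above `γ_i^s` wins that position or a better one at a price
at most the bid, so the deviation earns about `w · (v_i^s - γ_i^s)` per unit of keyword mass.
By `β`-expressiveness, `κ` bids capture a `β`-share of the total gain, and summing the Nash
inequalities gives `β (SW(𝔳) - Γ) ≤ Σ_i u_i(b) ≤ SW(b)`, where `Γ` is the welfare of the bids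
`γ`. Reindexing positions, `Γ` is the bid-weighted welfare of `b`, which is at most `SW(b)`
because `b` is conservative. Hence `β SW(𝔳) ≤ (β + 1) SW(b)`.
-/

namespace PBM

attribute [local instance] Classical.propDecidable

section RankIn

variable {ι α : Type*} [LinearOrder α] {f : ι → α} {P : Finset ι} {i j : ι}

def rankIn (f : ι → α) (P : Finset ι) (i : ι) : ℕ := #{j ∈ P | f j < f i}

lemma rankIn_lt_rankIn (hj : j ∈ P) (h : f j < f i) : rankIn f P j < rankIn f P i :=
  card_lt_card <| (ssubset_iff_of_subset fun k hk => by
    simp only [mem_filter] at hk ⊢; exact ⟨hk.1, hk.2.trans h⟩).2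
    ⟨j, by simp [hj, h], by simp⟩

lemma rankIn_lt_card (hi : i ∈ P) : rankIn f P i < #P :=
  card_lt_card <| (ssubset_iff_of_subset (filter_subset _ _)).2 ⟨i, hi, by simp⟩

lemma rankIn_lt_rankIn_iff (hf : Function.Injective f) (hi : i ∈ P) (hj : j ∈ P) :
    rankIn f P i < rankIn f P j ↔ f i < f j := by
  refine ⟨fun h => ?_, rankIn_lt_rankIn hi⟩
  rcases lt_trichotomy (f i) (f j) with hlt | heq | hgt
  · exact hlt
  · rw [hf heq] at h; exact absurd h (lt_irrefl _)
  · exact absurd h (rankIn_lt_rankIn hj hgt).not_gt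

lemma rankIn_injOn (hf : Function.Injective f) : Set.InjOn (rankIn f P) P := by
  intro i hi j hj h
  by_contra hne
  rcases (hf.ne hne).lt_or_gt with hlt | hgt
  · exact (rankIn_lt_rankIn hi hlt).ne h
  · exact (rankIn_lt_rankIn hj hgt).ne' h

lemma image_rankIn (hf : Function.Injective f) : P.image (rankIn f P) = range #P := by
  refine eq_of_subset_of_card_le (fun k hk => ?_) ?_
  · obtain ⟨i, hi, rfl⟩ := mem_image.1 hk
    exact mem_range.2 (rankIn_lt_card hi)
  · rw [card_range, card_image_of_injOn (rankIn_injOn hf)]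

end RankIn

section SingleKeyword

variable {n : ℕ}

def bidKey (x : Fin n → ℝ) (i : Fin n) : Lex (ℝᵒᵈ × Fin n) := toLex (OrderDual.toDual (x i), i)

lemma bidKey_injective (x : Fin n → ℝ) : Function.Injective (bidKey x) :=
  fun _ _ h => congrArg Prod.snd (toLex.injective h)

lemma bidKey_lt_bidKey {x : Fin n → ℝ} {i j : Fin n} :
    bidKey x j < bidKey x i ↔ x i < x j ∨ (x j = x i ∧ j < i) := by
  simp [bidKey, Prod.Lex.toLex_lt_toLex, eq_comm]

lemma le_of_bidKey_lt {x : Fin n → ℝ} {i j : Fin n} (h : bidKey x j < bidKey x i) :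
    x i ≤ x j := by
  rcases bidKey_lt_bidKey.1 h with h | h
  · exact h.le
  · exact h.1.ge

lemma rank_eq_rankIn (bs : Fin n → ℝ) (i : Fin n) :
    rank bs i = rankIn (bidKey bs) {j | 0 < bs j} i := by
  simp only [rank, rankIn, bidKey_lt_bidKey, filter_filter]

lemma rankAll_eq_rankIn (x : Fin n → ℝ) (i : Fin n) :
    rankAll x i = rankIn (bidKey x) univ i := by
  simp only [rankAll, rankIn, bidKey_lt_bidKey]

lemma rankAll_lt (x : Fin n → ℝ) (i : Fin n) : rankAll x i < n := by
  simpa [rankAll_eq_rankIn] using rankIn_lt_card (f := bidKey x) (mem_univ i)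

lemma rankAll_injective (x : Fin n → ℝ) : Function.Injective (rankAll x) := fun i j h =>
  rankIn_injOn (bidKey_injective x) (mem_univ i) (mem_univ j)
    (by simpa only [rankAll_eq_rankIn] using h)

def rankAllPerm (x : Fin n → ℝ) : Equiv.Perm (Fin n) :=
  Equiv.ofBijective (fun i => ⟨rankAll x i, rankAll_lt x i⟩) <|
    Finite.injective_iff_bijective.1 fun _ _ h => rankAll_injective x (Fin.val_eq_of_eq h)

@[simp] lemma rankAllPerm_val (x : Fin n → ℝ) (i : Fin n) :
    (rankAllPerm x i : ℕ) = rankAll x i := rfl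

@[simp] lemma rankAll_rankAllPerm_symm (x : Fin n → ℝ) (k : Fin n) :
    rankAll x ((rankAllPerm x).symm k) = k :=
  congrArg Fin.val ((rankAllPerm x).apply_symm_apply k)

lemma sum_mul_le_sum_rankAll_mul {w : ℕ → ℝ} (hw : Antitone w) (σ : Equiv.Perm (Fin n))
    (y : Fin n → ℝ) : ∑ i, w (σ i) * y i ≤ ∑ i, w (rankAll y i) * y i := by
  have hmono : Monovary y fun i => w (rankAll y i) := fun i j h => by
    have hr : rankAll y j < rankAll y i := lt_of_not_ge fun hle => (hw hle).not_gt h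
    rw [rankAll_eq_rankIn, rankAll_eq_rankIn,
      rankIn_lt_rankIn_iff (bidKey_injective y) (mem_univ _) (mem_univ _)] at hr
    exact le_of_bidKey_lt hr
  have := hmono.sum_smul_comp_perm_le_sum_smul (σ := σ.trans (rankAllPerm y).symm)
  simpa [mul_comm] using this

/-- Bid of the advertiser at position `k` (`0` if nobody with a positive bid is there). -/
def bidAt (bs : Fin n → ℝ) (k : ℕ) : ℝ :=
  ∑ j ∈ univ.filter (fun j => 0 < bs j ∧ rank bs j = k), bs j

variable {bs : Fin n → ℝ} {i j : Fin n} {k : ℕ}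

lemma rank_inj (hi : 0 < bs i) (hj : 0 < bs j) (h : rank bs i = rank bs j) : i = j :=
  rankIn_injOn (P := {j | 0 < bs j}) (bidKey_injective bs) (by simp [hi]) (by simp [hj])
    (by simpa only [rank_eq_rankIn] using h)

lemma bidAt_rank (hj : 0 < bs j) : bidAt bs (rank bs j) = bs j := by
  rw [bidAt, sum_eq_single_of_mem j (by simp [hj])]
  intro l hl hlj
  simp only [mem_filter, mem_univ, true_and] at hl
  exact absurd (rank_inj hl.1 hj hl.2) hlj

lemma bidAt_eq_zero (h : ∀ j, 0 < bs j → rank bs j ≠ k) : bidAt bs k = 0 :=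
  sum_eq_zero fun j hj => by
    simp only [mem_filter, mem_univ, true_and] at hj
    exact absurd hj.2 (h j hj.1)

lemma bidAt_nonneg (h0 : ∀ j, 0 ≤ bs j) (k : ℕ) : 0 ≤ bidAt bs k :=
  sum_nonneg fun j _ => h0 j

lemma pay_nonneg (h0 : ∀ j, 0 ≤ bs j) (i : Fin n) : 0 ≤ pay bs i :=
  bidAt_nonneg h0 _

lemma pay_le_self (hi : 0 < bs i) : pay bs i ≤ bs i := by
  change bidAt bs (rank bs i + 1) ≤ bs i
  by_cases h : ∃ j, 0 < bs j ∧ rank bs j = rank bs i + 1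
  · obtain ⟨j, hj, hrank⟩ := h
    rw [← hrank, bidAt_rank hj]
    have hlt : rank bs i < rank bs j := by omega
    rw [rank_eq_rankIn, rank_eq_rankIn, rankIn_lt_rankIn_iff (bidKey_injective bs)
      (by simp [hi]) (by simp [hj])] at hlt
    exact le_of_bidKey_lt hlt
  · simp only [not_exists, not_and] at h
    rw [bidAt_eq_zero h]
    exact hi.le

lemma card_bidAt_lt_le (k : ℕ) : #{j | 0 < bs j ∧ bidAt bs k < bs j} ≤ k := by
  by_cases h : ∃ j₀, 0 < bs j₀ ∧ rank bs j₀ = k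
  · obtain ⟨j₀, hj₀, rfl⟩ := h
    rw [bidAt_rank hj₀, rank_eq_rankIn, rankIn, filter_filter]
    refine card_le_card fun j hj => ?_
    simp only [mem_filter, mem_univ, true_and] at hj ⊢
    exact ⟨hj.1, bidKey_lt_bidKey.2 (Or.inl hj.2)⟩
  · simp only [not_exists, not_and] at h
    have hpos : #{j | 0 < bs j} ≤ k := by
      by_contra! hk
      obtain ⟨j, hj, hjk⟩ := mem_image.1 <|
        image_rankIn (P := {j | 0 < bs j}) (bidKey_injective bs) ▸ mem_range.2 hk
      exact h j (by simpa using hj) (by rwa [rank_eq_rankIn])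
    refine (card_le_card fun j hj => ?_).trans hpos
    simp only [mem_filter, mem_univ, true_and] at hj ⊢
    exact hj.1

lemma rank_lt (hj : 0 < bs j) : rank bs j < n := by
  rw [rank_eq_rankIn]
  exact (rankIn_lt_card (by simp [hj])).trans_le (card_le_univ _ |>.trans_eq (Fintype.card_fin n))

lemma rank_update_self_le {t : ℝ} (ht : bidAt bs k < t) : rank (Function.update bs i t) i ≤ k := by
  refine (card_le_card fun j hj => ?_).trans (card_bidAt_lt_le (bs := bs) k)
  simp only [mem_filter, mem_univ, true_and, Function.update_self] at hj ⊢
  have hji : j ≠ i := by rintro rfl; simp at hj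
  rw [Function.update_of_ne hji] at hj
  refine ⟨hj.1, ht.trans_le ?_⟩
  rcases hj.2 with h | h
  exacts [h.le, h.1.ge]

variable {w : ℕ → ℝ}

lemma slotW_nonneg (hw0 : ∀ k, 0 ≤ w k) (bs : Fin n → ℝ) (i : Fin n) : 0 ≤ slotW w bs i := by
  unfold slotW
  split_ifs
  exacts [hw0 _, le_rfl]

/-- Overbidding the bid at position `k` wins a slot at position `k` or better. -/
lemma le_gspUtil_update_self (hw : Antitone w) (hw0 : ∀ k, 0 ≤ w k) (h0 : ∀ j, 0 ≤ bs j)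
    {x : Fin n → ℝ} {t : ℝ} (ht : bidAt bs k < t) (htx : t ≤ x i) :
    w k * (x i - t) ≤ gspUtil w x (Function.update bs i t) i := by
  have htpos : 0 < t := (bidAt_nonneg h0 k).trans_lt ht
  have hpay : pay (Function.update bs i t) i ≤ t := by
    simpa using pay_le_self (bs := Function.update bs i t) (i := i) (by simpa using htpos)
  rw [gspUtil, slotW, if_pos (by simpa using htpos)]
  exact mul_le_mul (hw (rank_update_self_le ht)) (by linarith) (by linarith) (hw0 _)

lemma gspUtil_update_self_zero (x : Fin n → ℝ) : gspUtil w x (Function.update bs i 0) i = 0 := by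
  simp [gspUtil, slotW]

lemma sum_gspUtil_le (hw0 : ∀ k, 0 ≤ w k) (h0 : ∀ j, 0 ≤ bs j) (x : Fin n → ℝ) :
    ∑ i, gspUtil w x bs i ≤ ∑ i, slotW w bs i * x i :=
  sum_le_sum fun i _ =>
    mul_le_mul_of_nonneg_left (sub_le_self _ (pay_nonneg h0 i)) (slotW_nonneg hw0 bs i)

lemma sum_mul_bidAt (w : ℕ → ℝ) (bs : Fin n → ℝ) :
    ∑ k : Fin n, w k * bidAt bs k = ∑ j, slotW w bs j * bs j := by
  rw [Fin.sum_univ_eq_sum_range (fun k => w k * bidAt bs k)]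
  calc ∑ k ∈ range n, w k * bidAt bs k
      = ∑ k ∈ range n, ∑ j ∈ {j | 0 < bs j} with rank bs j = k, w (rank bs j) * bs j := by
        refine sum_congr rfl fun k _ => ?_
        rw [bidAt, mul_sum, filter_filter]
        exact sum_congr rfl fun j hj => by rw [(mem_filter.1 hj).2.2]
    _ = ∑ j ∈ {j | 0 < bs j}, w (rank bs j) * bs j :=
        sum_fiberwise_of_maps_to (fun j hj => mem_range.2 (rank_lt (mem_filter.1 hj).2)) _
    _ = ∑ j, slotW w bs j * bs j := by
        rw [sum_filter]
        refine sum_congr rfl fun j _ => ?_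
        unfold slotW
        split_ifs <;> simp

lemma sum_rankAll_mul_bidAt_le (hw0 : ∀ k, 0 ≤ w k) {x : Fin n → ℝ} (hbx : ∀ j, bs j ≤ x j) :
    ∑ i, w (rankAll x i) * bidAt bs (rankAll x i) ≤ ∑ j, slotW w bs j * x j :=
  calc ∑ i, w (rankAll x i) * bidAt bs (rankAll x i)
      = ∑ k : Fin n, w k * bidAt bs k :=
        Equiv.sum_comp (rankAllPerm x) fun k : Fin n => w k * bidAt bs k
    _ = ∑ j, slotW w bs j * bs j := sum_mul_bidAt w bs
    _ ≤ ∑ j, slotW w bs j * x j :=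
        sum_le_sum fun j _ => mul_le_mul_of_nonneg_left (hbx j) (slotW_nonneg hw0 bs j)

end SingleKeyword

/-- The witness is a `κ`-subset of maximal sum. -/
lemma exists_subset_card_eq_mul_sum_le {α : Type*} [DecidableEq α] (A : Finset α) (x : α → ℝ)
    {κ : ℕ} (hκ : κ ≤ #A) :
    ∃ D ⊆ A, #D = κ ∧ κ * ∑ s ∈ A, x s ≤ #A * ∑ s ∈ D, x s := by
  obtain ⟨D, hD, hmax⟩ :=
    exists_max_image (A.powersetCard κ) (fun D => ∑ s ∈ D, x s) (powersetCard_nonempty.2 hκ)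
  obtain ⟨hDA, hDκ⟩ := mem_powersetCard.1 hD
  refine ⟨D, hDA, hDκ, ?_⟩
  have hswap : ∀ t ∈ A \ D, ∀ s ∈ D, x t ≤ x s := by
    intro t ht s hs
    obtain ⟨htA, htD⟩ := mem_sdiff.1 ht
    have htD' : t ∉ D.erase s := fun h => htD (mem_of_mem_erase h)
    have hmem : insert t (D.erase s) ∈ A.powersetCard κ := by
      refine mem_powersetCard.2 ⟨insert_subset htA ((erase_subset s D).trans hDA), ?_⟩
      rw [card_insert_of_notMem htD', card_erase_of_mem hs, hDκ]
      have : 0 < κ := hDκ ▸ card_pos.2 ⟨s, hs⟩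
      omega
    have := hmax _ hmem
    rw [sum_insert htD', sum_erase_eq_sub hs] at this
    linarith
  have hdrop : ∀ t ∈ A \ D, (κ : ℝ) * x t ≤ ∑ s ∈ D, x s := fun t ht =>
    calc (κ : ℝ) * x t = ∑ _s ∈ D, x t := by rw [sum_const, hDκ, nsmul_eq_mul]
      _ ≤ ∑ s ∈ D, x s := sum_le_sum fun s hs => hswap t ht s hs
  calc (κ : ℝ) * ∑ s ∈ A, x s = κ * ∑ s ∈ D, x s + ∑ t ∈ A \ D, κ * x t := by
        rw [← sum_sdiff hDA, mul_add, mul_sum, add_comm]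
    _ ≤ κ * ∑ s ∈ D, x s + ∑ _t ∈ A \ D, ∑ s ∈ D, x s := by gcongr with t ht; exact hdrop t ht
    _ = #A * ∑ s ∈ D, x s := by
        rw [sum_const, nsmul_eq_mul, card_sdiff_of_subset hDA, hDκ, Nat.cast_sub hκ]
        ring

lemma exists_subset_card_le_mul_sum_le {α : Type*} [DecidableEq α] {A : Finset α} {x : α → ℝ}
    (hx : ∀ s ∈ A, 0 ≤ x s) {κ : ℕ} {β : ℝ} (hβ1 : β ≤ 1) (hβA : β * #A ≤ κ) :
    ∃ D ⊆ A, #D ≤ κ ∧ β * ∑ s ∈ A, x s ≤ ∑ s ∈ D, x s := by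
  have hA : 0 ≤ ∑ s ∈ A, x s := sum_nonneg hx
  rcases le_or_gt #A κ with hAκ | hκA
  · exact ⟨A, subset_rfl, hAκ, mul_le_of_le_one_left hA hβ1⟩
  obtain ⟨D, hDA, hDκ, hD⟩ := exists_subset_card_eq_mul_sum_le A x hκA.le
  refine ⟨D, hDA, hDκ.le, le_of_mul_le_mul_left ?_ (Nat.cast_pos.2 (hκA.trans_le' (Nat.zero_le κ)))⟩
  calc (#A : ℝ) * (β * ∑ s ∈ A, x s) = β * #A * ∑ s ∈ A, x s := by ring
    _ ≤ κ * ∑ s ∈ A, x s := mul_le_mul_of_nonneg_right hβA hA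
    _ ≤ #A * ∑ s ∈ D, x s := hD

section Keywords

variable {Q S : Type*} [Fintype Q] {n : ℕ} {P : Q → ℝ} {pi : Q → S → ℝ}

lemma mass_nonneg (hP0 : ∀ q, 0 ≤ P q) (hpi0 : ∀ q s, 0 ≤ pi q s) (s : S) : 0 ≤ mass P pi s :=
  sum_nonneg fun q _ => mul_nonneg (hpi0 q s) (hP0 q)

/-- Also true when `mass P pi s = 0`, where `kwVal` is a division by zero. -/
lemma mass_mul_kwVal (hP0 : ∀ q, 0 ≤ P q) (hpi0 : ∀ q s, 0 ≤ pi q s) (vq : Q → ℝ) (s : S) :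
    mass P pi s * kwVal P pi vq s = ∑ q, pi q s * vq q * P q := by
  by_cases hM : mass P pi s = 0
  · have hzero := (sum_eq_zero_iff_of_nonneg fun q _ => mul_nonneg (hpi0 q s) (hP0 q)).1 hM
    rw [hM, zero_mul, eq_comm]
    exact sum_eq_zero fun q hq => by linear_combination vq q * hzero q hq
  · rw [kwVal, ← mass, mul_div_cancel₀ _ hM]

lemma exists_pos_of_kwVal_pos (hP0 : ∀ q, 0 ≤ P q) (hpi0 : ∀ q s, 0 ≤ pi q s) {vq : Q → ℝ}
    {s : S} (h : 0 < kwVal P pi vq s) : ∃ q, 0 < pi q s ∧ 0 < vq q := by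
  by_contra! hno
  refine h.not_ge (div_nonpos_of_nonpos_of_nonneg (sum_nonpos fun q _ => ?_)
    (mass_nonneg hP0 hpi0 s))
  rcases (hpi0 q s).eq_or_lt with hq | hq
  · simp [← hq]
  · exact mul_nonpos_of_nonpos_of_nonneg (mul_nonpos_of_nonneg_of_nonpos hq.le (hno q hq)) (hP0 q)

lemma le_mul_kwVal (hP0 : ∀ q, 0 ≤ P q) (hpi0 : ∀ q s, 0 ≤ pi q s) {vq : Q → ℝ} {s : S} {c : ℝ}
    (hhom : ∀ q₁ q₂, 0 < pi q₁ s → 0 < pi q₂ s → vq q₁ ≤ c * vq q₂) {q : Q}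
    (hq : 0 < pi q s) (hPq : 0 < P q) : vq q ≤ c * kwVal P pi vq s := by
  have hM : 0 < mass P pi s :=
    (mul_pos hq hPq).trans_le (single_le_sum (fun q' _ => mul_nonneg (hpi0 q' s) (hP0 q'))
      (mem_univ q))
  refine le_of_mul_le_mul_left ?_ hM
  calc mass P pi s * vq q = ∑ q', pi q' s * P q' * vq q := by rw [mass, sum_mul]
    _ ≤ ∑ q', pi q' s * P q' * (c * vq q') := sum_le_sum fun q' _ => by
        rcases (hpi0 q' s).eq_or_lt with hq' | hq'
        · simp [← hq']
        · exact mul_le_mul_of_nonneg_left (hhom q q' hq hq') (mul_nonneg hq'.le (hP0 q'))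
    _ = mass P pi s * (c * kwVal P pi vq s) := by
        rw [mul_left_comm, mass_mul_kwVal hP0 hpi0, mul_sum]
        exact sum_congr rfl fun q' _ => by ring

variable {w : ℕ → ℝ} {v : Fin n → Q → ℝ}

def truthRank (P : Q → ℝ) (pi : Q → S → ℝ) (v : Fin n → Q → ℝ) (s : S) : Fin n → ℕ :=
  rankAll fun j => kwVal P pi (v j) s

lemma sum_rankAll_mul_le_mul_sum_truthRank_mul (hP0 : ∀ q, 0 ≤ P q) (hpi0 : ∀ q s, 0 ≤ pi q s)
    (hw : Antitone w) (hw0 : ∀ k, 0 ≤ w k) {c : ℝ} (hc : 0 ≤ c)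
    (hhom : ∀ (i : Fin n) (s : S) (q₁ q₂ : Q), 0 < pi q₁ s → 0 < pi q₂ s →
      v i q₁ ≤ c * v i q₂) {q : Q} {s : S} (hq : 0 < pi q s) (hPq : 0 < P q) :
    ∑ i, w (rankAll (fun j => v j q) i) * v i q ≤
      c * ∑ i, w (truthRank P pi v s i) * kwVal P pi (v i) s :=
  calc ∑ i, w (rankAll (fun j => v j q) i) * v i q
      ≤ ∑ i, w (rankAll (fun j => v j q) i) * (c * kwVal P pi (v i) s) :=
        sum_le_sum fun i _ => mul_le_mul_of_nonneg_left
          (le_mul_kwVal hP0 hpi0 (hhom i s) hq hPq) (hw0 _)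
    _ = c * ∑ i, w (rankAllPerm (fun j => v j q) i) * kwVal P pi (v i) s := by
        rw [mul_sum]
        exact sum_congr rfl fun i _ => by rw [rankAllPerm_val]; ring
    _ ≤ c * ∑ i, w (truthRank P pi v s i) * kwVal P pi (v i) s :=
        mul_le_mul_of_nonneg_left (sum_mul_le_sum_rankAll_mul hw _ _) hc

variable [Fintype S]

lemma util_eq_sum_mass_mul_gspUtil (hP0 : ∀ q, 0 ≤ P q) (hpi0 : ∀ q s, 0 ≤ pi q s)
    (b : Fin n → S → ℝ) (i : Fin n) :
    util P pi w v b i = ∑ s, mass P pi s *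
      gspUtil w (fun j => kwVal P pi (v j) s) (fun j => b j s) i := by
  simp only [util, gspUtil, mul_sum]
  rw [sum_comm]
  refine sum_congr rfl fun s _ => ?_
  set A := slotW w (fun j => b j s) i
  set B := pay (fun j => b j s) i
  calc ∑ q, P q * (pi q s * (A * (v i q - B)))
      = A * ∑ q, pi q s * v i q * P q - A * B * mass P pi s := by
        rw [mass, mul_sum, mul_sum, ← sum_sub_distrib]
        exact sum_congr rfl fun q _ => by ring
    _ = mass P pi s * (A * (kwVal P pi (v i) s - B)) := by
        rw [← mass_mul_kwVal hP0 hpi0]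
        ring

lemma SW_eq_sum_mass_mul (hP0 : ∀ q, 0 ≤ P q) (hpi0 : ∀ q s, 0 ≤ pi q s)
    (b : Fin n → S → ℝ) :
    SW P pi w v b = ∑ s, mass P pi s *
      ∑ i, slotW w (fun j => b j s) i * kwVal P pi (v i) s := by
  simp only [SW, mul_sum]
  rw [sum_comm]
  refine sum_congr rfl fun s _ => ?_
  rw [sum_comm]
  refine sum_congr rfl fun i _ => ?_
  calc ∑ q, P q * (pi q s * (slotW w (fun j => b j s) i * v i q))
      = slotW w (fun j => b j s) i * ∑ q, pi q s * v i q * P q := by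
        rw [mul_sum]
        exact sum_congr rfl fun q _ => by ring
    _ = mass P pi s * (slotW w (fun j => b j s) i * kwVal P pi (v i) s) := by
        rw [← mass_mul_kwVal hP0 hpi0]
        ring

lemma SWtruth_eq_sum_mass_mul :
    SWtruth P pi w v = ∑ s, mass P pi s *
      ∑ i, w (truthRank P pi v s i) * kwVal P pi (v i) s := by
  simp only [SWtruth, mass, sum_mul, mul_sum (s := (univ : Finset S))]
  rw [sum_comm]
  exact sum_congr rfl fun s _ => sum_congr rfl fun q _ => by rw [truthRank]; ring

lemma SWopt_le_mul_SWtruth (hP0 : ∀ q, 0 ≤ P q) (hpi0 : ∀ q s, 0 ≤ pi q s)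
    (hpi1 : ∀ q, ∑ s, pi q s = 1) (hw : Antitone w) (hw0 : ∀ k, 0 ≤ w k) {c : ℝ} (hc : 0 ≤ c)
    (hhom : ∀ (i : Fin n) (s : S) (q₁ q₂ : Q), 0 < pi q₁ s → 0 < pi q₂ s →
      v i q₁ ≤ c * v i q₂) :
    SWopt P w v ≤ c * SWtruth P pi w v := by
  rw [SWopt, SWtruth, mul_sum]
  refine sum_le_sum fun q _ => ?_
  rcases (hP0 q).eq_or_lt with hPq | hPq
  · simp [← hPq]
  calc P q * ∑ i, w (rankAll (fun j => v j q) i) * v i q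
      = P q * ∑ s, pi q s * ∑ i, w (rankAll (fun j => v j q) i) * v i q := by
        rw [← sum_mul, hpi1 q, one_mul]
    _ ≤ P q * ∑ s, pi q s * (c * ∑ i, w (truthRank P pi v s i) * kwVal P pi (v i) s) := by
        refine mul_le_mul_of_nonneg_left (sum_le_sum fun s _ => ?_) hPq.le
        rcases (hpi0 q s).eq_or_lt with hq | hq
        · simp [← hq]
        exact mul_le_mul_of_nonneg_left
          (sum_rankAll_mul_le_mul_sum_truthRank_mul hP0 hpi0 hw hw0 hc hhom hq hPq) hq.le
    _ = c * (P q * ∑ s, pi q s * ∑ i, w (truthRank P pi v s i) * kwVal P pi (v i) s) := by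
        simp only [mul_sum, mul_left_comm c]

lemma update_apply_right {α β γ : Type*} [DecidableEq α] (b : α → β → γ) (i : α) (b' : β → γ)
    (s : β) : (fun j => Function.update b i b' j s) = Function.update (fun j => b j s) i (b' s) :=
  funext fun j => Function.apply_update (fun _ g => g s) b i b' j

def IsPureNash (κ : ℕ) (P : Q → ℝ) (pi : Q → S → ℝ) (w : ℕ → ℝ) (v : Fin n → Q → ℝ)
    (b : Fin n → S → ℝ) : Prop :=
  ∀ (i : Fin n) (b' : S → ℝ), ValidBid κ b' →
    util P pi w v (Function.update b i b') i ≤ util P pi w v b i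

lemma validBid_ite {κ : ℕ} {D : Finset S} (hD : #D ≤ κ) {t : S → ℝ} (ht : ∀ s ∈ D, 0 ≤ t s) :
    ValidBid κ fun s => if s ∈ D then t s else 0 := by
  refine ⟨fun s => ?_, (card_le_card fun s hs => ?_).trans hD⟩
  · dsimp only
    split_ifs with hs
    exacts [ht s hs, le_rfl]
  · by_contra hsD
    simp [hsD] at hs

lemma sum_mass_mul_le_util_update (hP0 : ∀ q, 0 ≤ P q) (hpi0 : ∀ q s, 0 ≤ pi q s)
    (hw : Antitone w) (hw0 : ∀ k, 0 ≤ w k) {b : Fin n → S → ℝ} (hb0 : ∀ j s, 0 ≤ b j s)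
    {i : Fin n} {D : Finset S} {t : S → ℝ}
    (ht : ∀ s ∈ D, bidAt (fun j => b j s) (truthRank P pi v s i) < t s ∧
      t s ≤ kwVal P pi (v i) s) :
    ∑ s ∈ D, mass P pi s * (w (truthRank P pi v s i) * (kwVal P pi (v i) s - t s)) ≤
      util P pi w v (Function.update b i fun s => if s ∈ D then t s else 0) i := by
  rw [util_eq_sum_mass_mul_gspUtil hP0 hpi0, ← sum_subset (subset_univ D)]
  · refine sum_le_sum fun s hs => mul_le_mul_of_nonneg_left ?_ (mass_nonneg hP0 hpi0 s)
    rw [update_apply_right, if_pos hs]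
    exact le_gspUtil_update_self (x := fun j => kwVal P pi (v j) s) hw hw0 (fun j => hb0 j s)
      (ht s hs).1 (ht s hs).2
  · intro s _ hs
    rw [update_apply_right, if_neg hs, gspUtil_update_self_zero, mul_zero]

open Filter Topology in
/-- Overbidding `bidAt` by `ε` on the keywords of `D` and letting `ε → 0`. -/
lemma sum_mass_mul_sub_bidAt_le_util {κ : ℕ} {b : Fin n → S → ℝ} (hNE : IsPureNash κ P pi w v b)
    (hP0 : ∀ q, 0 ≤ P q) (hpi0 : ∀ q s, 0 ≤ pi q s) (hw : Antitone w) (hw0 : ∀ k, 0 ≤ w k)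
    (hb0 : ∀ j s, 0 ≤ b j s) {i : Fin n} {D : Finset S} (hDκ : #D ≤ κ)
    (hD : ∀ s ∈ D, bidAt (fun j => b j s) (truthRank P pi v s i) < kwVal P pi (v i) s) :
    ∑ s ∈ D, mass P pi s * (w (truthRank P pi v s i) *
      (kwVal P pi (v i) s - bidAt (fun j => b j s) (truthRank P pi v s i))) ≤
        util P pi w v b i := by
  set γ : S → ℝ := fun s => bidAt (fun j => b j s) (truthRank P pi v s i)
  have hsmall : ∀ᶠ ε in 𝓝[>] (0 : ℝ), 0 < ε ∧ ∀ s ∈ D, ε ≤ kwVal P pi (v i) s - γ s :=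
    eventually_mem_nhdsWithin.and <| (eventually_all_finset D).2 fun s hs =>
      nhdsWithin_le_nhds <| (eventually_lt_nhds (sub_pos.2 (hD s hs))).mono fun _ => le_of_lt
  have hcont : Continuous fun ε : ℝ => ∑ s ∈ D, mass P pi s * (w (truthRank P pi v s i) *
      (kwVal P pi (v i) s - (γ s + ε))) := by
    fun_prop
  refine le_of_tendsto (x := 𝓝[>] (0 : ℝ))
    (by simpa using (hcont.tendsto 0).mono_left nhdsWithin_le_nhds) ?_
  filter_upwards [hsmall] with ε ⟨hε, hεD⟩
  refine (sum_mass_mul_le_util_update hP0 hpi0 hw hw0 hb0 (t := fun s => γ s + ε)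
    fun s hs => ⟨by linarith, by linarith [hεD s hs]⟩).trans (hNE i _ ?_)
  exact validBid_ite hDκ fun s _ => add_nonneg (bidAt_nonneg (fun j => hb0 j s) _) hε.le

/-- Only keywords with `bidAt < kwVal` contribute positively, and `β`-expressiveness lets `i` bid
on a set of at most `κ` of them carrying a `β`-share of their total. -/
lemma mul_sum_mass_mul_sub_bidAt_le_util {κ : ℕ} {β : ℝ} {b : Fin n → S → ℝ}
    (hNE : IsPureNash κ P pi w v b) (hP0 : ∀ q, 0 ≤ P q) (hpi0 : ∀ q s, 0 ≤ pi q s)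
    (hw : Antitone w) (hw0 : ∀ k, 0 ≤ w k) (hb0 : ∀ j s, 0 ≤ b j s)
    (hKL : KLExpressive pi v κ β) (hβ0 : 0 ≤ β) (hβ1 : β ≤ 1) (i : Fin n) :
    β * ∑ s, mass P pi s * (w (truthRank P pi v s i) *
      (kwVal P pi (v i) s - bidAt (fun j => b j s) (truthRank P pi v s i))) ≤
        util P pi w v b i := by
  set γ : S → ℝ := fun s => bidAt (fun j => b j s) (truthRank P pi v s i)
  set g : S → ℝ := fun s => mass P pi s * (w (truthRank P pi v s i) * (kwVal P pi (v i) s - γ s))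
  set A : Finset S := {s | γ s < kwVal P pi (v i) s}
  have hgA : ∀ s ∈ A, 0 ≤ g s := fun s hs =>
    mul_nonneg (mass_nonneg hP0 hpi0 s) (mul_nonneg (hw0 _) (sub_nonneg.2 (mem_filter.1 hs).2.le))
  have hsum : ∑ s, g s ≤ ∑ s ∈ A, g s := by
    rw [sum_filter]
    refine sum_le_sum fun s _ => ?_
    split_ifs with h
    · exact le_rfl
    · exact mul_nonpos_of_nonneg_of_nonpos (mass_nonneg hP0 hpi0 s)
        (mul_nonpos_of_nonneg_of_nonpos (hw0 _) (sub_nonpos.2 (not_lt.1 h)))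
  have hArel : A ⊆ univ.filter fun s => ∃ q, 0 < pi q s ∧ 0 < v i q := fun s hs => by
    simp only [A, mem_filter, mem_univ, true_and] at hs ⊢
    exact exists_pos_of_kwVal_pos hP0 hpi0 ((bidAt_nonneg (fun j => hb0 j s) _).trans_lt hs)
  have hβA : β * #A ≤ κ :=
    (mul_le_mul_of_nonneg_left (Nat.cast_le.2 (card_le_card hArel)) hβ0).trans (hKL i)
  obtain ⟨D, hDA, hDκ, hD⟩ := exists_subset_card_le_mul_sum_le hgA hβ1 hβA
  calc β * ∑ s, g s ≤ β * ∑ s ∈ A, g s := mul_le_mul_of_nonneg_left hsum hβ0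
    _ ≤ ∑ s ∈ D, g s := hD
    _ ≤ util P pi w v b i := sum_mass_mul_sub_bidAt_le_util hNE hP0 hpi0 hw hw0 hb0 hDκ
        fun s hs => (mem_filter.1 (hDA hs)).2

lemma mul_SWtruth_le {κ : ℕ} {β : ℝ} {b : Fin n → S → ℝ}
    (hNE : IsPureNash κ P pi w v b) (hP0 : ∀ q, 0 ≤ P q) (hpi0 : ∀ q s, 0 ≤ pi q s)
    (hw : Antitone w) (hw0 : ∀ k, 0 ≤ w k) (hb0 : ∀ j s, 0 ≤ b j s)
    (hcons : Conservative P pi v b) (hKL : KLExpressive pi v κ β) (hβ0 : 0 ≤ β) (hβ1 : β ≤ 1) :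
    β * SWtruth P pi w v ≤ (β + 1) * SW P pi w v b := by
  have hutil : ∑ i, util P pi w v b i ≤ SW P pi w v b := by
    simp only [util_eq_sum_mass_mul_gspUtil hP0 hpi0, SW_eq_sum_mass_mul hP0 hpi0]
    rw [sum_comm]
    refine sum_le_sum fun s _ => ?_
    rw [← mul_sum]
    exact mul_le_mul_of_nonneg_left (sum_gspUtil_le hw0 (fun j => hb0 j s) _)
      (mass_nonneg hP0 hpi0 s)
  have hbid : ∑ s, mass P pi s * ∑ i, w (truthRank P pi v s i) *
      bidAt (fun j => b j s) (truthRank P pi v s i) ≤ SW P pi w v b := by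
    rw [SW_eq_sum_mass_mul hP0 hpi0]
    exact sum_le_sum fun s _ => mul_le_mul_of_nonneg_left
      (sum_rankAll_mul_bidAt_le hw0 fun j => hcons j s) (mass_nonneg hP0 hpi0 s)
  have hsplit : ∑ i, ∑ s, mass P pi s * (w (truthRank P pi v s i) *
      (kwVal P pi (v i) s - bidAt (fun j => b j s) (truthRank P pi v s i))) =
        SWtruth P pi w v - ∑ s, mass P pi s * ∑ i, w (truthRank P pi v s i) *
          bidAt (fun j => b j s) (truthRank P pi v s i) := by
    rw [SWtruth_eq_sum_mass_mul, ← sum_sub_distrib, sum_comm]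
    refine sum_congr rfl fun s _ => ?_
    rw [← mul_sub, ← sum_sub_distrib, mul_sum]
    exact sum_congr rfl fun i _ => by ring
  have hdev := sum_le_sum fun i (_ : i ∈ univ) =>
    mul_sum_mass_mul_sub_bidAt_le_util hNE hP0 hpi0 hw hw0 hb0 hKL hβ0 hβ1 i
  rw [← mul_sum, hsplit] at hdev
  linarith [mul_le_mul_of_nonneg_left hbid hβ0]

end Keywords

end PBM

open PBM in
theorem stmt8_general
    {Q S : Type*} [Fintype Q] [Fintype S] {n : ℕ}
    (P : Q → ℝ) (pi : Q → S → ℝ) (w : ℕ → ℝ) (κ : ℕ)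
    (hP0 : ∀ q, 0 ≤ P q)
    (hpi0 : ∀ q s, 0 ≤ pi q s) (hpi1 : ∀ q, ∑ s, pi q s = 1)
    (hw : Antitone w) (hw0 : ∀ k, 0 ≤ w k)
    (β c : ℝ) (hβ : 0 < β) (hβ1 : β ≤ 1) (hc : 0 < c)
    (v : Fin n → Q → ℝ)
    (hKL : KLExpressive pi v κ β)
    (hhom : ∀ (i : Fin n) (s : S) (q₁ q₂ : Q), 0 < pi q₁ s → 0 < pi q₂ s →
      v i q₁ ≤ c * v i q₂)
    (b : Fin n → S → ℝ)
    (hvalid : ∀ i, ValidBid κ (b i))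
    (hcons : Conservative P pi v b)
    (hNE : ∀ (i : Fin n) (b' : S → ℝ), ValidBid κ b' →
      util P pi w v (Function.update b i b') i ≤ util P pi w v b i) :
    SWopt P w v ≤ ((β + 1) / β) * c * SW P pi w v b := by
  have hb0 : ∀ j s, 0 ≤ b j s := fun j s => (hvalid j).1 s
  have htruth := mul_SWtruth_le hNE hP0 hpi0 hw hw0 hb0 hcons hKL hβ.le hβ1
  calc SWopt P w v ≤ c * SWtruth P pi w v := SWopt_le_mul_SWtruth hP0 hpi0 hpi1 hw hw0 hc.le hhom
    _ ≤ c * ((β + 1) / β * SW P pi w v b) := by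
        refine mul_le_mul_of_nonneg_left ?_ hc.le
        rw [div_mul_eq_mul_div, le_div_iff₀ hβ]
        linarith
    _ = ((β + 1) / β) * c * SW P pi w v b := by ring

open PBM in
/-- full-information multi-slot pure PoA of PBM-GSP: if the
auction system is `β`-KL-expressive and `c`-homogeneous then for every
conservative pure Nash equilibrium `b`, `SW(OPT(v)) ≤ ((β+1)/β)·c·SW(b)`. -/
theorem stmt8
    {Q S : Type*} [Fintype Q] [Fintype S] {n : ℕ}
    (P : Q → ℝ) (pi : Q → S → ℝ) (w : ℕ → ℝ) (κ : ℕ)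
    (hP0 : ∀ q, 0 ≤ P q) (hP1 : ∑ q, P q = 1)
    (hpi0 : ∀ q s, 0 ≤ pi q s) (hpi1 : ∀ q, ∑ s, pi q s = 1)
    (hS : ∀ s : S, ∃ q, 0 < pi q s)
    (hw : Antitone w) (hw0 : ∀ k, 0 ≤ w k) (hκ : 0 < κ)
    (β c : ℝ) (hβ : 0 < β) (hβ1 : β ≤ 1) (hc : 0 < c)
    (v : Fin n → Q → ℝ) (hv0 : ∀ i q, 0 ≤ v i q)
    (hKL : KLExpressive pi v κ β)
    (hhom : ∀ (i : Fin n) (s : S) (q₁ q₂ : Q), 0 < pi q₁ s → 0 < pi q₂ s →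
      v i q₁ ≤ c * v i q₂)
    (b : Fin n → S → ℝ)
    (hvalid : ∀ i, ValidBid κ (b i))
    (hcons : Conservative P pi v b)
    (hNE : ∀ (i : Fin n) (b' : S → ℝ), ValidBid κ b' →
      util P pi w v (Function.update b i b') i ≤ util P pi w v b i) :
    SWopt P w v ≤ ((β + 1) / β) * c * SW P pi w v b :=
  stmt8_general P pi w κ hP0 hpi0 hpi1 hw hw0 β c hβ hβ1 hc v hKL hhom b hvalid hcons hNE
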